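/- Let Λ ⊆ ℂⁿ be an Eisenstein lattice (a ℤ[ω]-module for ω = e^{2πi/3} spanned by n ℂ-linearly independent vectors) with packing radius 1 and covering radius R ≤ 3/2, regarded as a rank-2n real lattice in ℝ²ⁿ. Set α = 3 + ω and Λ' = αΛ. Then for every nonzero v ∈ Λ, dist(V, αv + V) ≥ (3/2)|v| ≥ 3 ≥ 2R, where V is the Voronoi cell of Λ about the origin. -/

import Mathlib

/-!
Every lattice vector `z` confines the Voronoi cell to the half-space `re ⟪t, z⟫ ≤ ‖z‖² / 2`.
Using `z = u` and `z = -u`, the cells `V` and `α • u + V` lie in slabs orthogonal to `u`, of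
width `‖u‖` and centred at heights `0` and `re α * ‖u‖`, so they are `(re α - 1) * ‖u‖` apart.
For `α = 3 + ω` one has `re α = 5 / 2`.
-/

open RCLike

section Voronoi

variable {𝕜 E : Type*} [RCLike 𝕜] [NormedAddCommGroup E] [InnerProductSpace 𝕜 E]

def voronoiCell (Λ : Set E) : Set E := {x | ∀ z ∈ Λ, ‖x‖ ≤ ‖x - z‖}

theorem re_inner_le_half_norm_sq_of_norm_le_norm_sub {x z : E} (h : ‖x‖ ≤ ‖x - z‖) :
    re (inner 𝕜 x z) ≤ ‖z‖ ^ 2 / 2 := by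
  have hsq : ‖x‖ ^ 2 ≤ ‖x - z‖ ^ 2 := pow_le_pow_left₀ (norm_nonneg x) h 2
  rw [norm_sub_sq (𝕜 := 𝕜)] at hsq
  linarith

theorem re_inner_smul_self (α : 𝕜) (u : E) : re (inner 𝕜 (α • u) u) = re α * ‖u‖ ^ 2 := by
  rw [inner_smul_left, inner_self_eq_norm_sq_to_K, ← ofReal_pow, re_mul_ofReal, conj_re]

theorem sub_one_mul_norm_le_dist_smul_add {Λ : Set E} {u x y : E} (hu : u ∈ Λ) (hu' : -u ∈ Λ)
    (hx : x ∈ voronoiCell Λ) (hy : y ∈ voronoiCell Λ) (α : 𝕜) :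
    (re α - 1) * ‖u‖ ≤ dist x (α • u + y) := by
  rcases eq_or_ne u 0 with rfl | hu0
  · simp
  have hxu := re_inner_le_half_norm_sq_of_norm_le_norm_sub (𝕜 := 𝕜) (hx u hu)
  have hyu := re_inner_le_half_norm_sq_of_norm_le_norm_sub (𝕜 := 𝕜) (hy (-u) hu')
  rw [inner_neg_right, map_neg, norm_neg] at hyu
  have hw : re (inner 𝕜 (α • u + y - x) u)
      = re α * ‖u‖ ^ 2 + re (inner 𝕜 y u) - re (inner 𝕜 x u) := by
    rw [inner_sub_left, inner_add_left, map_sub, map_add, re_inner_smul_self]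
  refine le_of_mul_le_mul_left ?_ (norm_pos_iff.mpr hu0)
  calc ‖u‖ * ((re α - 1) * ‖u‖) ≤ re (inner 𝕜 (α • u + y - x) u) := by rw [hw]; linarith
    _ ≤ ‖α • u + y - x‖ * ‖u‖ := re_inner_le_norm _ _
    _ = ‖u‖ * dist x (α • u + y) := by rw [mul_comm, dist_comm, dist_eq_norm]

end Voronoi

theorem Complex.exp_two_pi_mul_I_div_three_re :
    (Complex.exp (2 * Real.pi * Complex.I / 3)).re = -(1 / 2) := by
  rw [show 2 * (Real.pi : ℂ) * Complex.I / 3 = ((2 * Real.pi / 3 : ℝ) : ℂ) * Complex.I by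
    push_cast; ring, Complex.exp_ofReal_mul_I_re,
    show 2 * Real.pi / 3 = Real.pi - Real.pi / 3 by ring, Real.cos_pi_sub, Real.cos_pi_div_three]

theorem exists_neg_eq_sum_smul {ι M : Type*} [Fintype ι] [AddCommGroup M] [Module ℂ M]
    {ω : ℂ} {v : ι → M} {x : M} (hx : ∃ a b : ι → ℤ, x = ∑ i, ((a i : ℂ) + (b i : ℂ) * ω) • v i) :
    ∃ a b : ι → ℤ, -x = ∑ i, ((a i : ℂ) + (b i : ℂ) * ω) • v i := by
  obtain ⟨a, b, rfl⟩ := hx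
  refine ⟨-a, -b, ?_⟩
  rw [← Finset.sum_neg_distrib]
  refine Finset.sum_congr rfl fun i _ => ?_
  rw [← neg_smul]
  push_cast [Pi.neg_apply]
  ring_nf

theorem eisenstein_dist_voronoi_alpha_general
    (n : ℕ) (v : Fin n → EuclideanSpace ℂ (Fin n))
    (ω : ℂ) (hω : ω = Complex.exp (2 * Real.pi * Complex.I / 3))
    (Λ : Set (EuclideanSpace ℂ (Fin n)))
    (hΛ : Λ = {x | ∃ a b : Fin n → ℤ,
      x = ∑ i, (((a i : ℂ) + (b i : ℂ) * ω) • v i)})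
    -- packing radius 1: every nonzero lattice vector has norm at least 2
    (hpack : ∀ u ∈ Λ, u ≠ 0 → 2 ≤ ‖u‖)
    -- covering radius R ≤ 3/2
    (R : ℝ)
    (hR32 : R ≤ 3 / 2)
    (V : Set (EuclideanSpace ℂ (Fin n)))
    (hV : V = {x : EuclideanSpace ℂ (Fin n) | ∀ z ∈ Λ, ‖x‖ ≤ ‖x - z‖}) :
    ∀ u ∈ Λ, u ≠ 0 →
      (∀ x ∈ V, ∀ y ∈ V, (3 / 2) * ‖u‖ ≤ dist x ((3 + ω) • u + y))
      ∧ (3 : ℝ) ≤ (3 / 2) * ‖u‖ ∧ 2 * R ≤ 3 := by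
  intro u hu hu0
  have hneg : -u ∈ Λ := by
    rw [hΛ] at hu ⊢
    exact exists_neg_eq_sum_smul hu
  have hα : re (3 + ω) - 1 = 3 / 2 := by
    change (3 + ω).re - 1 = 3 / 2
    rw [Complex.add_re, hω, Complex.exp_two_pi_mul_I_div_three_re]
    norm_num
  refine ⟨fun x hx y hy => ?_, by linarith [hpack u hu hu0], by linarith⟩
  subst hV
  simpa only [hα] using sub_one_mul_norm_le_dist_smul_add hu hneg hx hy (3 + ω)

/-- Let `Λ ⊆ ℂⁿ` be an Eisenstein lattice (the `ℤ[ω]`-span of `n` ℂ-linearly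
independent vectors, `ω = e^{2πi/3}`) with packing radius `1` and covering radius
`R ≤ 3/2`, regarded as a rank-`2n` real lattice. Set `α = 3 + ω`. Then for every
nonzero `u ∈ Λ`, `dist(V, αu + V) ≥ (3/2)‖u‖ ≥ 3 ≥ 2R`, where `V` is the Voronoi cell
of `Λ` about the origin. -/
theorem eisenstein_dist_voronoi_alpha
    (n : ℕ) (v : Fin n → EuclideanSpace ℂ (Fin n))
    (hv : LinearIndependent ℂ v)
    (ω : ℂ) (hω : ω = Complex.exp (2 * Real.pi * Complex.I / 3))
    (Λ : Set (EuclideanSpace ℂ (Fin n)))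
    (hΛ : Λ = {x | ∃ a b : Fin n → ℤ,
      x = ∑ i, (((a i : ℂ) + (b i : ℂ) * ω) • v i)})
    -- packing radius 1: every nonzero lattice vector has norm at least 2
    (hpack : ∀ u ∈ Λ, u ≠ 0 → 2 ≤ ‖u‖)
    -- covering radius R ≤ 3/2
    (R : ℝ)
    (hR : IsLeast {r : ℝ | ∀ x : EuclideanSpace ℂ (Fin n), ∃ z ∈ Λ, dist x z ≤ r} R)
    (hR32 : R ≤ 3 / 2)
    (V : Set (EuclideanSpace ℂ (Fin n)))
    (hV : V = {x : EuclideanSpace ℂ (Fin n) | ∀ z ∈ Λ, ‖x‖ ≤ ‖x - z‖}) :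
    ∀ u ∈ Λ, u ≠ 0 →
      (∀ x ∈ V, ∀ y ∈ V, (3 / 2) * ‖u‖ ≤ dist x ((3 + ω) • u + y))
      ∧ (3 : ℝ) ≤ (3 / 2) * ‖u‖ ∧ 2 * R ≤ 3 :=
  eisenstein_dist_voronoi_alpha_general n v ω hω Λ hΛ hpack R hR32 V hV
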